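/- arXiv:math/0208155 — 4 statements merged into one kernel-verified Lean document; each statement's English description precedes it below -/
import Mathlib

section
/- Let q be a prime power with q > a + 1 for a positive integer a. The code C obtained by evaluating all polynomials in F_q[x,y] spanned by monomials x^i y^j with i ≥ 0, j ≥ 0, i + j ≤ a at all points of (F_q^×)² has length n = (q-1)², dimension k = (a+1)(a+2)/2, and minimum distance d = n - a(q-1). -/
/-!
By the Schwartz–Zippel lemma a nonzero polynomial of total degree at most `a` vanishes at no more
than `a (q - 1)` of the `(q - 1)²` points of the torus `(F^×)²`. This is the lower bound on the
weight, and since `a < q - 1` it also makes evaluation injective on the span of the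
`(a + 1)(a + 2)/2` monomials of the triangle. The bound is attained by `∏_{u ∈ B} (x - u)` for a
set `B` of `a` units, which vanishes exactly on the `a` lines `x = u`.
-/

open MvPolynomial

/-- Evaluation of a polynomial in two variables at all points of the torus
`(F^×)²`, as a linear map. -/
noncomputable def evalTorus (F : Type) [Field F] :
    MvPolynomial (Fin 2) F →ₗ[F] ((Fˣ × Fˣ) → F) :=
  LinearMap.pi fun t => (aeval ![((t.1 : F)), ((t.2 : F))]).toLinearMap

open Finset

section Torus
variable {F : Type} [Field F]

lemma evalTorus_apply (f : MvPolynomial (Fin 2) F) (t : Fˣ × Fˣ) :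
    evalTorus F f t = eval ![(t.1 : F), t.2] f := rfl

lemma evalTorus_aeval_X_zero (P : Polynomial F) (t : Fˣ × Fˣ) :
    evalTorus F (Polynomial.aeval (X 0) P) t = P.eval (t.1 : F) := by
  change aeval _ _ = _
  rw [← Polynomial.aeval_algHom_apply, aeval_X]
  simp

variable [Fintype F] [DecidableEq F]

lemma card_torus : Fintype.card (Fˣ × Fˣ) = (Fintype.card F - 1) ^ 2 := by
  rw [Fintype.card_prod, Fintype.card_units, sq]

lemma card_zeros_evalTorus_le {f : MvPolynomial (Fin 2) F} (hf : f ≠ 0) :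
    #{t | evalTorus F f t = 0} ≤ f.totalDegree * (Fintype.card F - 1) := by
  set S : Finset F := univ.map (Function.Embedding.subtype (· ≠ (0 : F)))
  have hS : #S = Fintype.card F - 1 := by simp [S]
  have hS0 : 0 < #S := by rw [hS, ← Fintype.card_units]; exact Fintype.card_pos
  have hembed :
      #{t | evalTorus F f t = 0} ≤ #{x ∈ Fintype.piFinset fun _ ↦ S | eval x f = 0} := by
    refine card_le_card_of_injOn (fun t ↦ ![(t.1 : F), t.2]) ?_ ?_
    · intro t ht
      simp [S, Fin.forall_fin_two, ← evalTorus_apply, (mem_filter.mp ht).2]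
    · intro t _ s _ h
      simpa [Prod.ext_iff, Units.ext_iff] using h
  have hSZ : #{x ∈ Fintype.piFinset fun _ ↦ S | eval x f = 0} ≤ f.totalDegree * #S := by
    have := schwartz_zippel_totalDegree hf S
    rw [div_le_div_iff₀ (by positivity) (by positivity), sq, ← mul_assoc] at this
    exact_mod_cast le_of_mul_le_mul_right this (by positivity)
  exact hS ▸ hembed.trans hSZ

lemma le_hammingNorm_evalTorus {f : MvPolynomial (Fin 2) F} (hf : f ≠ 0) :
    (Fintype.card F - 1) ^ 2 - f.totalDegree * (Fintype.card F - 1) ≤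
      hammingNorm (evalTorus F f) := by
  have hsplit := card_filter_add_card_filter_not (s := univ) (fun t ↦ evalTorus F f t = 0)
  rw [card_univ, card_torus] at hsplit
  have := card_zeros_evalTorus_le hf
  change _ ≤ #{t | ¬ evalTorus F f t = 0}
  omega

lemma eq_zero_of_evalTorus_eq_zero {f : MvPolynomial (Fin 2) F}
    (hdeg : f.totalDegree < Fintype.card F - 1) (hf : evalTorus F f = 0) : f = 0 := by
  by_contra hne
  have hweight := le_hammingNorm_evalTorus hne
  rw [hf, hammingNorm_zero, Nat.le_zero, sq] at hweight
  exact Nat.sub_ne_zero_of_lt (Nat.mul_lt_mul_of_pos_right hdeg (by omega)) hweight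

lemma hammingNorm_evalTorus_aeval_X_zero (P : Polynomial F) :
    hammingNorm (evalTorus F (Polynomial.aeval (X 0) P)) =
      #{u : Fˣ | P.eval (u : F) ≠ 0} * (Fintype.card F - 1) := by
  have : ({t | evalTorus F (Polynomial.aeval (X 0) P) t ≠ 0} : Finset (Fˣ × Fˣ)) =
      ({u : Fˣ | P.eval (u : F) ≠ 0} : Finset Fˣ) ×ˢ univ := by
    ext t
    simp [evalTorus_aeval_X_zero]
  rw [hammingNorm, this, card_product, card_univ, Fintype.card_units]

end Torus

def triangle (a : ℕ) : Finset (ℕ × ℕ) := (range (a + 1)).biUnion antidiagonal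

lemma mem_triangle {a : ℕ} {p : ℕ × ℕ} : p ∈ triangle a ↔ p.1 + p.2 ≤ a := by
  simp [triangle]

lemma card_triangle (a : ℕ) : #(triangle a) = (a + 1) * (a + 2) / 2 := by
  rw [triangle, card_biUnion fun s _ t _ hst ↦ disjoint_left.mpr fun p hs ht ↦
    hst ((mem_antidiagonal.mp hs).symm.trans (mem_antidiagonal.mp ht))]
  simp only [Nat.card_antidiagonal]
  have gauss := sum_range_succ' (fun x ↦ x) (a + 1)
  rw [sum_range_id, add_zero] at gauss
  rw [← gauss, Nat.add_sub_cancel, mul_comm]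

lemma linearIndependent_X_zero_pow_mul_X_one_pow (R : Type) [CommSemiring R] :
    LinearIndependent R
      fun p : ℕ × ℕ ↦ (X 0 ^ p.1 * X 1 ^ p.2 : MvPolynomial (Fin 2) R) := by
  have hexp : Function.Injective
      fun p : ℕ × ℕ ↦ Finsupp.single (0 : Fin 2) p.1 + Finsupp.single 1 p.2 := by
    intro p r h
    have h0 := DFunLike.congr_fun h 0
    have h1 := DFunLike.congr_fun h 1
    simp only [Finsupp.add_apply, Finsupp.single_apply] at h0 h1
    simp_all [Prod.ext_iff]
  convert (basisMonomials (Fin 2) R).linearIndependent.comp _ hexp with p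
  simp [X_pow_eq_monomial, monomial_mul]

section Code
variable (F : Type) [Field F]

def triangleMonomials (a : ℕ) : Set (MvPolynomial (Fin 2) F) :=
  {m | ∃ i j : ℕ, i + j ≤ a ∧ m = X 0 ^ i * X 1 ^ j}

noncomputable def triangleCode (a : ℕ) : Submodule F (Fˣ × Fˣ → F) :=
  (Submodule.span F (triangleMonomials F a)).map (evalTorus F)

variable {F}

lemma triangleMonomials_eq_range (a : ℕ) :
    triangleMonomials F a = Set.range fun p : triangle a ↦ X 0 ^ p.1.1 * X 1 ^ p.1.2 := by
  ext m
  simp [triangleMonomials, mem_triangle, eq_comm]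

lemma totalDegree_le_of_mem_span_triangleMonomials {a : ℕ} {f : MvPolynomial (Fin 2) F}
    (hf : f ∈ Submodule.span F (triangleMonomials F a)) : f.totalDegree ≤ a := by
  suffices Submodule.span F (triangleMonomials F a) ≤ restrictTotalDegree (Fin 2) F a from
    (mem_restrictTotalDegree _ _ _).mp (this hf)
  rw [Submodule.span_le]
  rintro m ⟨i, j, hij, rfl⟩
  rw [SetLike.mem_coe, mem_restrictTotalDegree]
  refine (totalDegree_mul _ _).trans ?_
  simpa [totalDegree_X_pow] using hij

lemma aeval_X_zero_mem_span_triangleMonomials {a : ℕ} {P : Polynomial F}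
    (hP : P.natDegree ≤ a) :
    Polynomial.aeval (X 0) P ∈ Submodule.span F (triangleMonomials F a) := by
  rw [Polynomial.aeval_eq_sum_range]
  refine Submodule.sum_mem _ fun i hi ↦ Submodule.smul_mem _ _ (Submodule.subset_span ?_)
  exact ⟨i, 0, by rw [mem_range] at hi; omega, by rw [pow_zero, mul_one]⟩

variable [Fintype F] [DecidableEq F]

lemma finrank_triangleCode {a : ℕ} (ha : a + 1 < Fintype.card F) :
    Module.finrank F (triangleCode F a) = (a + 1) * (a + 2) / 2 := by
  set v := fun p : triangle a ↦ (X 0 ^ p.1.1 * X 1 ^ p.1.2 : MvPolynomial (Fin 2) F)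
  have hv : LinearIndependent F v :=
    (linearIndependent_X_zero_pow_mul_X_one_pow F).comp _ Subtype.val_injective
  have hdisj : Disjoint (Submodule.span F (Set.range v)) (LinearMap.ker (evalTorus F)) := by
    rw [Submodule.disjoint_def]
    intro f hf hker
    rw [← triangleMonomials_eq_range] at hf
    exact eq_zero_of_evalTorus_eq_zero
      ((totalDegree_le_of_mem_span_triangleMonomials hf).trans_lt (by omega)) hker
  rw [triangleCode, triangleMonomials_eq_range, Submodule.map_span, ← Set.range_comp,
    finrank_span_eq_card (hv.map hdisj), Fintype.card_coe, card_triangle]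

lemma le_hammingNorm_of_mem_triangleCode {a : ℕ} {c : Fˣ × Fˣ → F}
    (hc : c ∈ triangleCode F a) (hc0 : c ≠ 0) :
    (Fintype.card F - 1) ^ 2 - a * (Fintype.card F - 1) ≤ hammingNorm c := by
  obtain ⟨f, hf, rfl⟩ := hc
  have hf0 : f ≠ 0 := by rintro rfl; exact hc0 (map_zero _)
  refine le_trans ?_ (le_hammingNorm_evalTorus hf0)
  gcongr
  exact totalDegree_le_of_mem_span_triangleMonomials hf

lemma exists_mem_triangleCode_hammingNorm_eq {a : ℕ} (ha : a + 1 < Fintype.card F) :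
    ∃ c ∈ triangleCode F a, c ≠ 0 ∧
      hammingNorm c = (Fintype.card F - 1) ^ 2 - a * (Fintype.card F - 1) := by
  obtain ⟨B, -, hB⟩ := exists_subset_card_eq (s := (univ : Finset Fˣ)) (n := a)
    (by rw [card_univ, Fintype.card_units]; omega)
  set P : Polynomial F := ∏ u ∈ B, (Polynomial.X - Polynomial.C (u : F))
  have hPdeg : P.natDegree ≤ a := by simp [P, hB]
  have hPzeros : ({u : Fˣ | P.eval (u : F) ≠ 0} : Finset Fˣ) = Bᶜ := by
    ext u
    simp [P, Polynomial.eval_prod, prod_eq_zero_iff, sub_eq_zero, Units.val_inj]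
  have hweight : hammingNorm (evalTorus F (Polynomial.aeval (X 0) P)) =
      (Fintype.card F - 1) ^ 2 - a * (Fintype.card F - 1) := by
    rw [hammingNorm_evalTorus_aeval_X_zero, hPzeros, card_compl, Fintype.card_units, hB,
      Nat.sub_mul, sq]
  refine ⟨_, Submodule.mem_map_of_mem (aeval_X_zero_mem_span_triangleMonomials hPdeg), ?_,
    hweight⟩
  rw [← hammingNorm_ne_zero_iff, hweight, sq]
  exact Nat.sub_ne_zero_of_lt (Nat.mul_lt_mul_of_pos_right (by omega) (by omega))

end Code

theorem hansen_code_triangle_general (F : Type) [Field F] [Fintype F] [DecidableEq F]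
    (a : ℕ) (hq : a + 1 < Fintype.card F) :
    Fintype.card (Fˣ × Fˣ) = (Fintype.card F - 1) ^ 2 ∧
    Module.finrank F ((Submodule.span F
        {m : MvPolynomial (Fin 2) F | ∃ i j : ℕ, i + j ≤ a ∧ m = X 0 ^ i * X 1 ^ j}).map
        (evalTorus F)) = (a + 1) * (a + 2) / 2 ∧
    (∃ c ∈ (Submodule.span F
        {m : MvPolynomial (Fin 2) F | ∃ i j : ℕ, i + j ≤ a ∧ m = X 0 ^ i * X 1 ^ j}).map
        (evalTorus F), c ≠ 0 ∧
        hammingNorm c = (Fintype.card F - 1) ^ 2 - a * (Fintype.card F - 1)) ∧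
    (∀ c ∈ (Submodule.span F
        {m : MvPolynomial (Fin 2) F | ∃ i j : ℕ, i + j ≤ a ∧ m = X 0 ^ i * X 1 ^ j}).map
        (evalTorus F), c ≠ 0 →
        (Fintype.card F - 1) ^ 2 - a * (Fintype.card F - 1) ≤ hammingNorm c) :=
  ⟨card_torus, finrank_triangleCode hq, exists_mem_triangleCode_hammingNorm_eq hq,
    fun _ hc hc0 ↦ le_hammingNorm_of_mem_triangleCode hc hc0⟩

/-- Hansen's toric code for the triangle with vertices (0,0), (a,0), (0,a):
length (q-1)², dimension (a+1)(a+2)/2, minimum distance n - a(q-1). -/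
theorem hansen_code_triangle (F : Type) [Field F] [Fintype F] [DecidableEq F]
    (a : ℕ) (ha : 0 < a) (hq : a + 1 < Fintype.card F) :
    Fintype.card (Fˣ × Fˣ) = (Fintype.card F - 1) ^ 2 ∧
    Module.finrank F ((Submodule.span F
        {m : MvPolynomial (Fin 2) F | ∃ i j : ℕ, i + j ≤ a ∧ m = X 0 ^ i * X 1 ^ j}).map
        (evalTorus F)) = (a + 1) * (a + 2) / 2 ∧
    (∃ c ∈ (Submodule.span F
        {m : MvPolynomial (Fin 2) F | ∃ i j : ℕ, i + j ≤ a ∧ m = X 0 ^ i * X 1 ^ j}).map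
        (evalTorus F), c ≠ 0 ∧
        hammingNorm c = (Fintype.card F - 1) ^ 2 - a * (Fintype.card F - 1)) ∧
    (∀ c ∈ (Submodule.span F
        {m : MvPolynomial (Fin 2) F | ∃ i j : ℕ, i + j ≤ a ∧ m = X 0 ^ i * X 1 ^ j}).map
        (evalTorus F), c ≠ 0 →
        (Fintype.card F - 1) ^ 2 - a * (Fintype.card F - 1) ≤ hammingNorm c) :=
  hansen_code_triangle_general F a hq
end

section
/- Let q be a prime power with q > max(a, b, b+am) + 1 for positive integers a, b, m. The code C obtained by evaluating all F_q-linear combinations of monomials x^i y^j with 0 ≤ i ≤ a and 0 ≤ j ≤ b + mi at all points of (F_q^×)² has length n = (q-1)², dimension k = (a+1)(b+1) + m·a(a+1)/2, and minimum distance d = min((q-a-1)(q-b-1), (q-1)(q-b-am-1)). -/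
open MvPolynomial

open Finset

set_option linter.unusedSectionVars false
set_option maxHeartbeats 1000000

section Helpers

variable {F : Type} [Field F] [DecidableEq F] [Fintype F]

lemma finsupp_fin2_eq (d : Fin 2 →₀ ℕ) :
    d = Finsupp.single 0 (d 0) + Finsupp.single 1 (d 1) := by
  ext i; fin_cases i <;> simp

lemma monomial_eq_prod (d : Fin 2 →₀ ℕ) (c : F) :
    (monomial d c : MvPolynomial (Fin 2) F) = C c * X 0 ^ (d 0) * X 1 ^ (d 1) := by
  rw [monomial_eq, Finsupp.prod_fintype _ _ (fun i => pow_zero _), Fin.prod_univ_two, mul_assoc]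

lemma X_pow_mul_eq (i j : ℕ) :
    (X 0 ^ i * X 1 ^ j : MvPolynomial (Fin 2) F)
      = monomial (Finsupp.single 0 i + Finsupp.single 1 j) 1 := by
  rw [monomial_eq_prod]
  simp

/-- the one-variable polynomial `f(t, Y)` -/
noncomputable def yPoly (f : MvPolynomial (Fin 2) F) (t : F) : Polynomial F :=
  ∑ d ∈ f.support, Polynomial.C (coeff d f * t ^ (d 0)) * Polynomial.X ^ (d 1)

lemma yPoly_eval (f : MvPolynomial (Fin 2) F) (t u : F) :
    (yPoly f t).eval u = aeval ![t, u] f := by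
  rw [yPoly, Polynomial.eval_finset_sum]
  rw [show (aeval ![t, u]) f = ∑ d ∈ f.support, coeff d f * t ^ (d 0) * u ^ (d 1) from by
    conv_lhs => rw [← support_sum_monomial_coeff f]
    rw [map_sum]
    refine Finset.sum_congr rfl fun d _ => ?_
    rw [aeval_monomial, Finsupp.prod_fintype _ _ (fun i => pow_zero _), Fin.prod_univ_two]
    simp [mul_assoc]]
  simp

lemma yPoly_natDegree_le (f : MvPolynomial (Fin 2) F) (t : F) :
    (yPoly f t).natDegree ≤ f.support.sup (fun d => d 1) := by
  refine Polynomial.natDegree_sum_le_of_forall_le _ _ fun d hd => ?_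
  refine le_trans (Polynomial.natDegree_C_mul_le _ _) ?_
  rw [Polynomial.natDegree_X_pow]
  exact Finset.le_sup (f := fun d => d 1) hd

lemma yPoly_coeff (f : MvPolynomial (Fin 2) F) (t : F) (k : ℕ) :
    (yPoly f t).coeff k = ∑ d ∈ f.support.filter (fun d => d 1 = k), coeff d f * t ^ (d 0) := by
  rw [yPoly, Polynomial.finset_sum_coeff]
  rw [Finset.sum_filter]
  refine Finset.sum_congr rfl fun d _ => ?_
  rw [Polynomial.coeff_C_mul, Polynomial.coeff_X_pow]
  by_cases h : d 1 = k
  · simp [h]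
  · rw [if_neg (fun hk : k = d 1 => h hk.symm), if_neg h, mul_zero]

noncomputable def topCoeff (f : MvPolynomial (Fin 2) F) : Polynomial F :=
  ∑ d ∈ f.support.filter (fun d => d 1 = f.support.sup (fun d => d 1)),
    Polynomial.C (coeff d f) * Polynomial.X ^ (d 0)

lemma topCoeff_coeff (f : MvPolynomial (Fin 2) F) (i : ℕ) :
    (topCoeff f).coeff i = ∑ d ∈ f.support.filter
      (fun d => d 1 = f.support.sup (fun d => d 1)),
      (if i = d 0 then coeff d f else 0) := by
  rw [topCoeff, Polynomial.finset_sum_coeff]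
  refine Finset.sum_congr rfl fun d _ => ?_
  rw [Polynomial.coeff_C_mul, Polynomial.coeff_X_pow]
  by_cases h : i = d 0 <;> simp [h]

lemma topCoeff_eval (f : MvPolynomial (Fin 2) F) (t : F) :
    (topCoeff f).eval t = ∑ d ∈ f.support.filter
      (fun d => d 1 = f.support.sup (fun d => d 1)), coeff d f * t ^ (d 0) := by
  rw [topCoeff, Polynomial.eval_finset_sum]
  simp

lemma topCoeff_ne_zero (f : MvPolynomial (Fin 2) F) (hf : f ≠ 0) : topCoeff f ≠ 0 := by
  have hne : f.support.Nonempty := support_nonempty.2 hf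
  obtain ⟨d', hd', hJ⟩ := Finset.exists_mem_eq_sup f.support hne (fun d => d 1)
  intro h0
  have : (topCoeff f).coeff (d' 0) = coeff d' f := by
    rw [topCoeff_coeff]
    rw [Finset.sum_eq_single d']
    · simp
    · intro d hd hne'
      rcases Finset.mem_filter.1 hd with ⟨hds, hd1⟩
      rw [if_neg]
      intro h01
      apply hne'
      rw [finsupp_fin2_eq d, finsupp_fin2_eq d', ← h01, hd1, hJ]
    · intro hd'n
      exact absurd (Finset.mem_filter.2 ⟨hd', hJ.symm⟩) hd'n
  rw [h0] at this
  simp only [Polynomial.coeff_zero] at this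
  exact (mem_support_iff.1 hd') this.symm

lemma topCoeff_coeff_ne_zero (f : MvPolynomial (Fin 2) F) (i : ℕ)
    (h : (topCoeff f).coeff i ≠ 0) :
    ∃ d ∈ f.support, d 0 = i ∧ d 1 = f.support.sup (fun d => d 1) := by
  rw [topCoeff_coeff] at h
  obtain ⟨d, hd, hne⟩ := Finset.exists_ne_zero_of_sum_ne_zero h
  rcases Finset.mem_filter.1 hd with ⟨hds, hd1⟩
  refine ⟨d, hds, ?_, hd1⟩
  by_contra h0
  exact hne (if_neg (fun h' => h0 h'.symm))

lemma card_add_trailing_le (p : Polynomial F) (hp : p ≠ 0) (S : Finset Fˣ)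
    (hS : ∀ t ∈ S, p.eval ↑t = 0) :
    S.card + p.natTrailingDegree ≤ p.natDegree := by
  set ℓ := p.natTrailingDegree with hℓ
  set M : Multiset F := S.val.map Units.val with hM
  have hnodup : M.Nodup := S.nodup.map (fun _ _ h => Units.ext h)
  have hXdvd : (Polynomial.X : Polynomial F) ^ ℓ ∣ p := by
    rw [Polynomial.X_pow_dvd_iff]
    exact fun d hd => Polynomial.coeff_eq_zero_of_lt_natTrailingDegree hd
  have hle : Multiset.replicate ℓ 0 + M ≤ p.roots := by
    rw [Multiset.le_iff_count]
    intro x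
    rw [Polynomial.count_roots, Multiset.count_add]
    by_cases hx : x = 0
    · subst hx
      have h0 : Multiset.count (0 : F) M = 0 := by
        rw [Multiset.count_eq_zero]
        intro hmem
        obtain ⟨t, _, ht⟩ := Multiset.mem_map.1 hmem
        exact t.ne_zero ht
      rw [h0, add_zero, Multiset.count_replicate, if_pos rfl]
      exact (Polynomial.le_rootMultiplicity_iff hp).2 (by simpa using hXdvd)
    · rw [Multiset.count_replicate, if_neg (fun h => hx h.symm), zero_add]
      by_cases hmem : x ∈ M
      · have h1 : Multiset.count x M = 1 := Multiset.count_eq_one_of_mem hnodup hmem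
        rw [h1]
        obtain ⟨t, htS, ht⟩ := Multiset.mem_map.1 hmem
        have hroot : p.IsRoot x := by rw [← ht]; exact hS t htS
        exact (Polynomial.rootMultiplicity_pos hp).2 hroot
      · rw [Multiset.count_eq_zero.2 hmem]
        exact Nat.zero_le _
  have hcard := Multiset.card_le_card hle
  simp only [Multiset.card_add, Multiset.card_replicate, Multiset.card_map, hM] at hcard
  calc S.card + ℓ = ℓ + Multiset.card S.val := by rw [Nat.add_comm]; rfl
  _ ≤ Multiset.card p.roots := hcard
  _ ≤ p.natDegree := p.card_roots'

lemma arithZ (Q a b m s : ℤ) (ha : 0 < a) (hm : 0 ≤ m) (hs : 0 ≤ s) (hsa : s ≤ a) :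
    min ((Q - a) * (Q - b)) (Q * (Q - (b + m * a))) ≤ (Q - s) * (Q - (b + m * (a - s))) := by
  rcases le_total ((Q - a) * (Q - b)) (Q * (Q - (b + m * a))) with h | h
  · rw [min_eq_left h]
    nlinarith [mul_nonneg (mul_nonneg (mul_nonneg hm hs) (sub_nonneg.2 hsa)) ha.le,
      mul_nonneg (sub_nonneg.2 hsa) (sub_nonneg.2 h)]
  · rw [min_eq_right h]
    nlinarith [mul_nonneg (mul_nonneg (mul_nonneg hm hs) (sub_nonneg.2 hsa)) ha.le,
      mul_nonneg hs (sub_nonneg.2 h)]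

lemma card_units_roots (p : Polynomial F) (hp : p ≠ 0) :
    #(univ.filter fun u : Fˣ => p.eval ↑u = 0) ≤ p.natDegree := by
  have h1 : #(univ.filter fun u : Fˣ => p.eval ↑u = 0) ≤ p.roots.toFinset.card := by
    refine Finset.card_le_card_of_injOn (fun u => (↑u : F)) ?_ ?_
    · intro u hu
      rw [Finset.mem_coe, Multiset.mem_toFinset, Polynomial.mem_roots hp]
      exact (mem_filter.1 (Finset.mem_coe.1 hu)).2
    · intro u _ v _ h
      exact Units.ext h
  exact le_trans h1 (le_trans p.roots.toFinset_card_le p.card_roots')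

lemma card_filter_prod {α β : Type*} [Fintype α] [Fintype β] [DecidableEq α] [DecidableEq β]
    (P : α × β → Prop) [DecidablePred P] :
    #(univ.filter P) = ∑ t : α, #(univ.filter fun u => P (t, u)) := by
  rw [Finset.card_eq_sum_card_fiberwise (f := Prod.fst) (t := univ) (fun x _ => mem_univ _)]
  refine Finset.sum_congr rfl fun t _ => ?_
  refine Finset.card_bij' (fun p _ => p.2) (fun u _ => (t, u)) ?_ ?_ ?_ ?_
  · rintro ⟨x, y⟩ hp
    simp only [mem_filter, mem_univ, true_and] at hp ⊢
    rcases hp with ⟨hP, h1⟩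
    subst h1
    exact hP
  · intro u hu
    simp only [mem_filter, mem_univ, true_and] at hu ⊢
    simp [hu]
  · rintro ⟨x, y⟩ hp
    simp only [mem_filter] at hp
    simp [hp.2]
  · intro u _
    rfl

def genSet (F : Type) [Field F] (a b m : ℕ) : Set (MvPolynomial (Fin 2) F) :=
  {p | ∃ i j : ℕ, i ≤ a ∧ j ≤ b + m * i ∧ p = X 0 ^ i * X 1 ^ j}

lemma support_ok_of_mem_span {a b m : ℕ} {f : MvPolynomial (Fin 2) F}
    (hf : f ∈ Submodule.span F (genSet F a b m)) :
    ∀ d ∈ f.support, d 0 ≤ a ∧ d 1 ≤ b + m * (d 0) := by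
  set M : Submodule F (MvPolynomial (Fin 2) F) :=
    { carrier := {g | ∀ d ∈ g.support, d 0 ≤ a ∧ d 1 ≤ b + m * (d 0)}
      zero_mem' := by simp
      add_mem' := by
        intro p q hp hq d hd
        rcases Finset.mem_union.1 (MvPolynomial.support_add hd) with h | h
        · exact hp d h
        · exact hq d h
      smul_mem' := by
        intro c p hp d hd
        exact hp d (MvPolynomial.support_smul hd) } with hM
  have hspan : Submodule.span F (genSet F a b m) ≤ M := by
    rw [Submodule.span_le]
    rintro p ⟨i, j, hi, hj, rfl⟩
    intro d hd
    rw [X_pow_mul_eq, support_monomial] at hd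
    simp only [one_ne_zero, if_false, Finset.mem_singleton] at hd
    subst hd
    constructor <;> simp [Finsupp.single_apply, hi, hj]
  exact hspan hf

lemma mem_span_of_support_ok {a b m : ℕ} {f : MvPolynomial (Fin 2) F}
    (hf : ∀ d ∈ f.support, d 0 ≤ a ∧ d 1 ≤ b + m * (d 0)) :
    f ∈ Submodule.span F (genSet F a b m) := by
  rw [← support_sum_monomial_coeff f]
  refine Submodule.sum_mem _ fun d hd => ?_
  have h1 : (monomial d (coeff d f) : MvPolynomial (Fin 2) F)
      = coeff d f • (X 0 ^ (d 0) * X 1 ^ (d 1)) := by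
    rw [monomial_eq_prod, smul_eq_C_mul, mul_assoc]
  rw [h1]
  exact Submodule.smul_mem _ _ (Submodule.subset_span ⟨d 0, d 1, (hf d hd).1, (hf d hd).2, rfl⟩)

def goodFinset (a b m : ℕ) : Finset (Σ _ : ℕ, ℕ) :=
  (range (a+1)).sigma (fun i => range (b + m * i + 1))

noncomputable def goodMono (F : Type) [Field F] (a b m : ℕ) (x : ↥(goodFinset a b m)) :
    MvPolynomial (Fin 2) F :=
  monomial (Finsupp.single 0 (x : Σ _ : ℕ, ℕ).1 + Finsupp.single 1 (x : Σ _ : ℕ, ℕ).2) 1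

lemma genSet_eq_range (a b m : ℕ) :
    genSet F a b m = Set.range (goodMono F a b m) := by
  ext p
  constructor
  · rintro ⟨i, j, hi, hj, rfl⟩
    refine ⟨⟨⟨i, j⟩, ?_⟩, ?_⟩
    · rw [goodFinset, Finset.mem_sigma, Finset.mem_range, Finset.mem_range]
      dsimp only
      omega
    · rw [goodMono, X_pow_mul_eq]
  · rintro ⟨⟨⟨i, j⟩, hx⟩, rfl⟩
    rw [goodFinset, Finset.mem_sigma, Finset.mem_range, Finset.mem_range] at hx
    dsimp only at hx
    exact ⟨i, j, by omega, by omega, (X_pow_mul_eq i j).symm⟩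

lemma goodMono_linearIndependent (a b m : ℕ) :
    LinearIndependent F (goodMono F a b m) := by
  have h := (MvPolynomial.basisMonomials (Fin 2) F).linearIndependent
  have h2 : goodMono F a b m = (MvPolynomial.basisMonomials (Fin 2) F) ∘
      (fun x : ↥(goodFinset a b m) =>
        Finsupp.single 0 (x : Σ _ : ℕ, ℕ).1 + Finsupp.single 1 (x : Σ _ : ℕ, ℕ).2) := by
    funext x
    simp [goodMono, MvPolynomial.coe_basisMonomials]
  rw [h2]
  refine h.comp _ ?_
  rintro ⟨⟨i, j⟩, hx⟩ ⟨⟨i', j'⟩, hy⟩ hxy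
  have h0 := DFunLike.congr_fun hxy (0 : Fin 2)
  have h1 := DFunLike.congr_fun hxy (1 : Fin 2)
  simp only [Finsupp.add_apply, Finsupp.single_apply] at h0 h1
  norm_num at h0 h1
  subst h0; subst h1; rfl

lemma card_goodFinset (a b m : ℕ) :
    (goodFinset a b m).card = (a + 1) * (b + 1) + m * (a * (a + 1) / 2) := by
  rw [goodFinset, Finset.card_sigma]
  simp only [Finset.card_range]
  have h1 : ∑ i ∈ range (a+1), (b + m * i + 1)
      = (a+1) * (b+1) + m * (∑ i ∈ range (a+1), i) := by
    rw [Finset.sum_add_distrib, Finset.sum_add_distrib, Finset.sum_const, Finset.sum_const,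
      Finset.card_range, smul_eq_mul, smul_eq_mul, mul_one, ← Finset.mul_sum]
    ring
  rw [h1]
  have h2 : (∑ i ∈ range (a+1), i) * 2 = a * (a+1) := by
    rw [Finset.sum_range_id_mul_two (a+1), Nat.add_sub_cancel, mul_comm]
  have h3 : ∑ i ∈ range (a+1), i = a * (a+1) / 2 := by omega
  rw [h3]

lemma finrank_map_eq (a b m : ℕ)
    (hinj : ∀ f ∈ Submodule.span F (genSet F a b m), evalTorus F f = 0 → f = 0) :
    Module.finrank F ((Submodule.span F (genSet F a b m)).map (evalTorus F))
      = (a + 1) * (b + 1) + m * (a * (a + 1) / 2) := by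
  set S := Submodule.span F (genSet F a b m) with hS
  have hfin : FiniteDimensional F ↥S := by
    rw [hS, genSet_eq_range]
    exact FiniteDimensional.span_of_finite F (Set.finite_range _)
  have hker : LinearMap.ker ((evalTorus F).domRestrict S) = ⊥ := by
    rw [LinearMap.ker_eq_bot']
    rintro ⟨f, hf⟩ hLf
    have : evalTorus F f = 0 := hLf
    exact Subtype.ext (hinj f hf this)
  have hrk := LinearMap.finrank_range_add_finrank_ker ((evalTorus F).domRestrict S)
  rw [LinearMap.range_domRestrict, hker, finrank_bot, add_zero] at hrk
  rw [hrk, hS, genSet_eq_range, finrank_span_eq_card (goodMono_linearIndependent a b m),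
    Fintype.card_coe, card_goodFinset]

lemma hammingNorm_evalTorus (f : MvPolynomial (Fin 2) F) :
    hammingNorm (evalTorus F f)
      = #(univ.filter fun p : Fˣ × Fˣ => aeval ![((p.1 : F)), ((p.2 : F))] f ≠ 0) := by
  rw [hammingNorm]
  congr 1

lemma weight_lower (a b m : ℕ) (ha : 0 < a) (hm : 0 < m)
    (hq : max a (max b (b + a * m)) + 1 < Fintype.card F)
    (f : MvPolynomial (Fin 2) F) (hf : f ∈ Submodule.span F (genSet F a b m)) (hf0 : f ≠ 0) :
    min ((Fintype.card F - a - 1) * (Fintype.card F - b - 1))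
      ((Fintype.card F - 1) * (Fintype.card F - b - a * m - 1))
      ≤ hammingNorm (evalTorus F f) := by
  classical
  set q := Fintype.card F with hqdef
  set Q := q - 1 with hQdef
  have hQcard : Fintype.card Fˣ = Q := by rw [Fintype.card_units]
  have hmax1 : a ≤ max a (max b (b + a * m)) := le_max_left _ _
  have hmax2 : b ≤ max a (max b (b + a * m)) := le_trans (le_max_left _ _) (le_max_right _ _)
  have hmax3 : b + a * m ≤ max a (max b (b + a * m)) :=
    le_trans (le_max_right _ _) (le_max_right _ _)
  have haQ : a < Q := by omega
  have hbQ : b < Q := by omega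
  have hbamQ : b + a * m < Q := by omega
  have hok := support_ok_of_mem_span hf
  set J := f.support.sup (fun d => d 1) with hJdef
  have hJab : J ≤ b + m * a := by
    refine Finset.sup_le fun d hd => le_trans (hok d hd).2 ?_
    exact Nat.add_le_add_left (Nat.mul_le_mul_left m (hok d hd).1) b
  have hcJ : topCoeff f ≠ 0 := topCoeff_ne_zero f hf0
  set Sbad : Finset Fˣ := univ.filter (fun t : Fˣ => yPoly f ↑t = 0) with hSbad
  set s := Sbad.card with hs
  have hSroot : ∀ t ∈ Sbad, (topCoeff f).eval ↑t = 0 := by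
    intro t ht
    have h0 : yPoly f ↑t = 0 := (mem_filter.1 ht).2
    have h1 := yPoly_coeff f ↑t J
    rw [h0, Polynomial.coeff_zero] at h1
    rw [topCoeff_eval, ← hJdef, ← h1]
  have hst := card_add_trailing_le (topCoeff f) hcJ Sbad hSroot
  have hdegcJ : (topCoeff f).natDegree ≤ a := by
    rw [topCoeff]
    refine Polynomial.natDegree_sum_le_of_forall_le _ _ fun d hd => ?_
    refine le_trans (Polynomial.natDegree_C_mul_le _ _) ?_
    rw [Polynomial.natDegree_X_pow]
    exact (hok d (Finset.mem_filter.1 hd).1).1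
  have hsa : s + (topCoeff f).natTrailingDegree ≤ a := le_trans hst hdegcJ
  have hJℓ : J ≤ b + m * (topCoeff f).natTrailingDegree := by
    have htc : (topCoeff f).coeff (topCoeff f).natTrailingDegree ≠ 0 :=
      Polynomial.trailingCoeff_nonzero_iff_nonzero.2 hcJ
    obtain ⟨d, hd, hd0, hd1⟩ := topCoeff_coeff_ne_zero f _ htc
    rw [← hJdef] at hd1
    rw [← hd1, ← hd0]
    exact (hok d hd).2
  have hJ2 : J ≤ b + m * (a - s) := by
    refine le_trans hJℓ (Nat.add_le_add_left (Nat.mul_le_mul_left m ?_) b)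
    omega
  -- counting
  have hterm : ∀ t : Fˣ, t ∉ Sbad →
      Q - J ≤ #(univ.filter fun u : Fˣ => aeval ![((t : F)), ((u : F))] f ≠ 0) := by
    intro t ht
    have hg0 : yPoly f (t : F) ≠ 0 := by
      intro h
      exact ht (mem_filter.2 ⟨mem_univ _, h⟩)
    have heq : (univ.filter fun u : Fˣ => aeval ![((t : F)), ((u : F))] f ≠ 0)
        = (univ.filter fun u : Fˣ => ¬ ((yPoly f (t : F)).eval ↑u = 0)) := by
      refine Finset.filter_congr fun u _ => ?_
      rw [yPoly_eval]
    rw [heq]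
    rw [Finset.filter_not, Finset.card_sdiff_of_subset (Finset.filter_subset _ _)]
    have h1 : #(univ.filter fun u : Fˣ => (yPoly f (t : F)).eval ↑u = 0) ≤ J :=
      le_trans (card_units_roots _ hg0) (yPoly_natDegree_le f (t : F))
    have h2 : #(univ : Finset Fˣ) = Q := by rw [Finset.card_univ, hQcard]
    omega
  have hcount : (Q - s) * (Q - J) ≤ hammingNorm (evalTorus F f) := by
    rw [hammingNorm_evalTorus, card_filter_prod (fun p : Fˣ × Fˣ =>
      aeval ![((p.1 : F)), ((p.2 : F))] f ≠ 0)]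
    calc (Q - s) * (Q - J) = ∑ _t ∈ Sbadᶜ, (Q - J) := by
          rw [Finset.sum_const, smul_eq_mul, Finset.card_compl, hQcard, ← hs]
      _ ≤ ∑ t ∈ Sbadᶜ, #(univ.filter fun u : Fˣ => aeval ![((t : F)), ((u : F))] f ≠ 0) := by
          refine Finset.sum_le_sum fun t ht => hterm t ?_
          exact (Finset.mem_compl.1 ht)
      _ ≤ ∑ t : Fˣ, #(univ.filter fun u : Fˣ => aeval ![((t : F)), ((u : F))] f ≠ 0) := by
          refine Finset.sum_le_sum_of_subset (Finset.subset_univ _)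
  refine le_trans ?_ hcount
  have hmin1 : q - a - 1 = Q - a := by omega
  have hmin2 : q - b - 1 = Q - b := by omega
  have hmin4 : q - b - a * m - 1 = Q - (b + m * a) := by
    have : a * m = m * a := Nat.mul_comm a m
    omega
  rw [hmin1, hmin2, hmin4]
  have hstep : (Q - s) * (Q - (b + m * (a - s))) ≤ (Q - s) * (Q - J) :=
    Nat.mul_le_mul_left _ (Nat.sub_le_sub_left hJ2 Q)
  refine le_trans ?_ hstep
  have hsa' : s ≤ a := by omega
  have hsub1 : b + m * (a - s) ≤ Q := by
    have : m * (a - s) ≤ m * a := Nat.mul_le_mul_left m (Nat.sub_le a s)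
    omega
  have hbma : b + m * a ≤ Q := by
    have : a * m = m * a := Nat.mul_comm a m
    omega
  zify [hsa', hsub1, hbma, le_of_lt haQ, le_of_lt hbQ, le_trans hsa' (le_of_lt haQ)]
  have := arithZ (Q : ℤ) a b m s (by exact_mod_cast ha) (by positivity) (by positivity)
    (by exact_mod_cast hsa')
  convert this using 3 <;> push_cast [hsa'] <;> ring

lemma aeval_polyX0 (p : Polynomial F) (x y : F) :
    aeval ![x, y] (Polynomial.aeval (X 0 : MvPolynomial (Fin 2) F) p) = p.eval x := by
  rw [← Polynomial.aeval_algHom_apply]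
  simp

lemma aeval_polyX1 (p : Polynomial F) (x y : F) :
    aeval ![x, y] (Polynomial.aeval (X 1 : MvPolynomial (Fin 2) F) p) = p.eval y := by
  rw [← Polynomial.aeval_algHom_apply]
  simp

lemma prod_mem_span (a b m : ℕ) (p r : Polynomial F) (hp : p.natDegree ≤ a)
    (hr : r.natDegree ≤ b) :
    (Polynomial.aeval (X 0 : MvPolynomial (Fin 2) F) p)
      * (Polynomial.aeval (X 1 : MvPolynomial (Fin 2) F) r)
      ∈ Submodule.span F (genSet F a b m) := by
  rw [Polynomial.aeval_eq_sum_range (p := p), Polynomial.aeval_eq_sum_range (p := r),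
    Finset.sum_mul_sum]
  refine Submodule.sum_mem _ fun i hi => Submodule.sum_mem _ fun j hj => ?_
  rw [smul_mul_smul_comm]
  refine Submodule.smul_mem _ _ (Submodule.subset_span ⟨i, j, ?_, ?_, rfl⟩)
  · rw [Finset.mem_range] at hi; omega
  · rw [Finset.mem_range] at hj
    have : j ≤ b := by omega
    omega

lemma xa_mul_mem_span (a b m : ℕ) (r : Polynomial F) (hr : r.natDegree ≤ b + m * a) :
    (X 0 : MvPolynomial (Fin 2) F) ^ a
      * (Polynomial.aeval (X 1 : MvPolynomial (Fin 2) F) r)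
      ∈ Submodule.span F (genSet F a b m) := by
  rw [Polynomial.aeval_eq_sum_range (p := r), Finset.mul_sum]
  refine Submodule.sum_mem _ fun j hj => ?_
  rw [mul_smul_comm]
  refine Submodule.smul_mem _ _ (Submodule.subset_span ⟨a, j, le_refl a, ?_, rfl⟩)
  rw [Finset.mem_range] at hj; omega

lemma natDegree_prod_linear_le (T : Finset Fˣ) :
    (∏ t ∈ T, (Polynomial.X - Polynomial.C ((t : F)))).natDegree ≤ T.card := by
  refine le_trans (Polynomial.natDegree_prod_le T
    (fun t => Polynomial.X - Polynomial.C ((t : F)))) ?_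
  have h1 : ∀ t ∈ T, (Polynomial.X - Polynomial.C ((t : F))).natDegree ≤ 1 :=
    fun t _ => (Polynomial.natDegree_X_sub_C ((t : F))).le
  have h2 := Finset.sum_le_sum h1
  rw [Finset.sum_const, smul_eq_mul, mul_one] at h2
  exact h2

lemma eval_prod_linear_ne_zero (T : Finset Fˣ) (x : Fˣ) :
    Polynomial.eval ((x : F)) (∏ t ∈ T, (Polynomial.X - Polynomial.C ((t : F)))) ≠ 0 ↔ x ∉ T := by
  rw [Polynomial.eval_prod, Finset.prod_ne_zero_iff]
  simp only [Polynomial.eval_sub, Polynomial.eval_X, Polynomial.eval_C, sub_ne_zero]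
  constructor
  · intro h hx
    exact (h x hx) rfl
  · intro hx t ht heq
    exact hx (by rwa [Units.ext heq])

lemma card_filter_not_mem (T : Finset Fˣ) :
    #(univ.filter fun x : Fˣ => x ∉ T) = Fintype.card Fˣ - T.card := by
  have : (univ.filter fun x : Fˣ => x ∉ T) = Tᶜ := by
    ext x; simp
  rw [this, Finset.card_compl]

lemma weight_f1 (T U : Finset Fˣ) :
    #(univ.filter fun pp : Fˣ × Fˣ =>
      aeval ![((pp.1 : F)), ((pp.2 : F))]
        ((Polynomial.aeval (X 0 : MvPolynomial (Fin 2) F)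
            (∏ t ∈ T, (Polynomial.X - Polynomial.C ((t : F)))))
          * (Polynomial.aeval (X 1 : MvPolynomial (Fin 2) F)
            (∏ u ∈ U, (Polynomial.X - Polynomial.C ((u : F)))))) ≠ 0)
      = (Fintype.card Fˣ - T.card) * (Fintype.card Fˣ - U.card) := by
  have heq : (univ.filter fun pp : Fˣ × Fˣ =>
      aeval ![((pp.1 : F)), ((pp.2 : F))]
        ((Polynomial.aeval (X 0 : MvPolynomial (Fin 2) F)
            (∏ t ∈ T, (Polynomial.X - Polynomial.C ((t : F)))))
          * (Polynomial.aeval (X 1 : MvPolynomial (Fin 2) F)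
            (∏ u ∈ U, (Polynomial.X - Polynomial.C ((u : F)))))) ≠ 0)
      = univ.filter fun pp : Fˣ × Fˣ => pp.1 ∉ T ∧ pp.2 ∉ U := by
    refine Finset.filter_congr fun pp _ => ?_
    rw [map_mul, aeval_polyX0, aeval_polyX1, mul_ne_zero_iff,
      eval_prod_linear_ne_zero, eval_prod_linear_ne_zero]
  have heq2 : (univ.filter fun pp : Fˣ × Fˣ => pp.1 ∉ T ∧ pp.2 ∉ U)
      = (univ.filter fun x : Fˣ => x ∉ T) ×ˢ (univ.filter fun x : Fˣ => x ∉ U) := by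
    ext pp
    simp [Finset.mem_product]
  rw [heq, heq2, Finset.card_product, card_filter_not_mem, card_filter_not_mem]

lemma weight_f2 (a : ℕ) (U : Finset Fˣ) :
    #(univ.filter fun pp : Fˣ × Fˣ =>
      aeval ![((pp.1 : F)), ((pp.2 : F))]
        ((X 0 : MvPolynomial (Fin 2) F) ^ a
          * (Polynomial.aeval (X 1 : MvPolynomial (Fin 2) F)
            (∏ u ∈ U, (Polynomial.X - Polynomial.C ((u : F)))))) ≠ 0)
      = Fintype.card Fˣ * (Fintype.card Fˣ - U.card) := by
  have heq : (univ.filter fun pp : Fˣ × Fˣ =>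
      aeval ![((pp.1 : F)), ((pp.2 : F))]
        ((X 0 : MvPolynomial (Fin 2) F) ^ a
          * (Polynomial.aeval (X 1 : MvPolynomial (Fin 2) F)
            (∏ u ∈ U, (Polynomial.X - Polynomial.C ((u : F)))))) ≠ 0)
      = univ.filter fun pp : Fˣ × Fˣ => pp.2 ∉ U := by
    refine Finset.filter_congr fun pp _ => ?_
    rw [map_mul, aeval_polyX1, map_pow, aeval_X, mul_ne_zero_iff, eval_prod_linear_ne_zero]
    have hx : (![((pp.1 : F)), ((pp.2 : F))] 0) ^ a ≠ 0 := by
      simp only [Matrix.cons_val_zero]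
      exact pow_ne_zero _ (Units.ne_zero pp.1)
    tauto
  have heq2 : (univ.filter fun pp : Fˣ × Fˣ => pp.2 ∉ U)
      = (univ : Finset Fˣ) ×ˢ (univ.filter fun x : Fˣ => x ∉ U) := by
    ext pp
    simp [Finset.mem_product]
  rw [heq, heq2, Finset.card_product, card_filter_not_mem, Finset.card_univ]

end Helpers


/-- Hansen's toric code for the trapezoid with vertices (0,0), (a,0), (0,b), (a,b+am):
length (q-1)², dimension (a+1)(b+1) + m·a(a+1)/2, minimum distance
min((q-a-1)(q-b-1), (q-1)(q-b-am-1)). -/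
theorem hansen_code_trapezoid (F : Type) [Field F] [Fintype F] [DecidableEq F]
    (a b m : ℕ) (ha : 0 < a) (hb : 0 < b) (hm : 0 < m)
    (hq : max a (max b (b + a * m)) + 1 < Fintype.card F) :
    Fintype.card (Fˣ × Fˣ) = (Fintype.card F - 1) ^ 2 ∧
    Module.finrank F ((Submodule.span F
        {p : MvPolynomial (Fin 2) F |
          ∃ i j : ℕ, i ≤ a ∧ j ≤ b + m * i ∧ p = X 0 ^ i * X 1 ^ j}).map
        (evalTorus F)) = (a + 1) * (b + 1) + m * (a * (a + 1) / 2) ∧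
    (∃ c ∈ (Submodule.span F
        {p : MvPolynomial (Fin 2) F |
          ∃ i j : ℕ, i ≤ a ∧ j ≤ b + m * i ∧ p = X 0 ^ i * X 1 ^ j}).map
        (evalTorus F), c ≠ 0 ∧
        hammingNorm c = min ((Fintype.card F - a - 1) * (Fintype.card F - b - 1))
          ((Fintype.card F - 1) * (Fintype.card F - b - a * m - 1))) ∧
    (∀ c ∈ (Submodule.span F
        {p : MvPolynomial (Fin 2) F |
          ∃ i j : ℕ, i ≤ a ∧ j ≤ b + m * i ∧ p = X 0 ^ i * X 1 ^ j}).map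
        (evalTorus F), c ≠ 0 →
        min ((Fintype.card F - a - 1) * (Fintype.card F - b - 1))
          ((Fintype.card F - 1) * (Fintype.card F - b - a * m - 1)) ≤ hammingNorm c) := by
  classical
  have hset : {p : MvPolynomial (Fin 2) F |
      ∃ i j : ℕ, i ≤ a ∧ j ≤ b + m * i ∧ p = X 0 ^ i * X 1 ^ j} = genSet F a b m := rfl
  have hQcard : Fintype.card Fˣ = Fintype.card F - 1 := by rw [Fintype.card_units]
  have hmax1 : a ≤ max a (max b (b + a * m)) := le_max_left _ _
  have hmax2 : b ≤ max a (max b (b + a * m)) := le_trans (le_max_left _ _) (le_max_right _ _)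
  have hmax3 : b + a * m ≤ max a (max b (b + a * m)) :=
    le_trans (le_max_right _ _) (le_max_right _ _)
  have hinj : ∀ f ∈ Submodule.span F (genSet F a b m), evalTorus F f = 0 → f = 0 := by
    intro f hf h0
    by_contra hf0
    have hlow := weight_lower a b m ha hm hq f hf hf0
    rw [h0, hammingNorm_zero] at hlow
    have h1 : 0 < (Fintype.card F - a - 1) * (Fintype.card F - b - 1) := Nat.mul_pos (by omega) (by omega)
    have h2 : 0 < (Fintype.card F - 1) * (Fintype.card F - b - a * m - 1) := Nat.mul_pos (by omega) (by omega)
    omega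
  refine ⟨?_, ?_, ?_, ?_⟩
  · rw [Fintype.card_prod, hQcard, sq]
  · rw [hset]
    exact finrank_map_eq a b m hinj
  · rw [hset]
    rcases le_total ((Fintype.card F - a - 1) * (Fintype.card F - b - 1)) ((Fintype.card F - 1) * (Fintype.card F - b - a * m - 1)) with hcase | hcase
    · obtain ⟨T, hTsub, hT⟩ := Finset.exists_subset_card_eq (s := (univ : Finset Fˣ)) (n := a)
        (by rw [Finset.card_univ, hQcard]; omega)
      obtain ⟨U, hUsub, hU⟩ := Finset.exists_subset_card_eq (s := (univ : Finset Fˣ)) (n := b)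
        (by rw [Finset.card_univ, hQcard]; omega)
      have hmem : (Polynomial.aeval (X 0 : MvPolynomial (Fin 2) F)
            (∏ t ∈ T, (Polynomial.X - Polynomial.C ((t : F)))))
          * (Polynomial.aeval (X 1 : MvPolynomial (Fin 2) F)
            (∏ u ∈ U, (Polynomial.X - Polynomial.C ((u : F)))))
          ∈ Submodule.span F (genSet F a b m) :=
        prod_mem_span a b m _ _ (le_trans (natDegree_prod_linear_le T) (by omega))
          (le_trans (natDegree_prod_linear_le U) (by omega))
      have hwt : hammingNorm (evalTorus F ((Polynomial.aeval (X 0 : MvPolynomial (Fin 2) F)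
            (∏ t ∈ T, (Polynomial.X - Polynomial.C ((t : F)))))
          * (Polynomial.aeval (X 1 : MvPolynomial (Fin 2) F)
            (∏ u ∈ U, (Polynomial.X - Polynomial.C ((u : F)))))))
          = (Fintype.card F - a - 1) * (Fintype.card F - b - 1) := by
        rw [hammingNorm_evalTorus, weight_f1, hT, hU, hQcard]
        congr 1 <;> omega
      refine ⟨_, Submodule.mem_map_of_mem hmem, ?_, ?_⟩
      · intro h0
        rw [h0, hammingNorm_zero] at hwt
        have h1 : 0 < (Fintype.card F - a - 1) * (Fintype.card F - b - 1) := Nat.mul_pos (by omega) (by omega)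
        omega
      · rw [hwt, min_eq_left hcase]
    · obtain ⟨U, hUsub, hU⟩ := Finset.exists_subset_card_eq (s := (univ : Finset Fˣ)) (n := b + a * m)
        (by rw [Finset.card_univ, hQcard]; omega)
      have hmem : (X 0 : MvPolynomial (Fin 2) F) ^ a
          * (Polynomial.aeval (X 1 : MvPolynomial (Fin 2) F)
            (∏ u ∈ U, (Polynomial.X - Polynomial.C ((u : F)))))
          ∈ Submodule.span F (genSet F a b m) :=
        xa_mul_mem_span a b m _ (le_trans (natDegree_prod_linear_le U)
          (by rw [hU, Nat.mul_comm a m]))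
      have hwt : hammingNorm (evalTorus F ((X 0 : MvPolynomial (Fin 2) F) ^ a
          * (Polynomial.aeval (X 1 : MvPolynomial (Fin 2) F)
            (∏ u ∈ U, (Polynomial.X - Polynomial.C ((u : F)))))))
          = (Fintype.card F - 1) * (Fintype.card F - b - a * m - 1) := by
        rw [hammingNorm_evalTorus, weight_f2, hU, hQcard]
        congr 1
        omega
      refine ⟨_, Submodule.mem_map_of_mem hmem, ?_, ?_⟩
      · intro h0
        rw [h0, hammingNorm_zero] at hwt
        have h2 : 0 < (Fintype.card F - 1) * (Fintype.card F - b - a * m - 1) := Nat.mul_pos (by omega) (by omega)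
        omega
      · rw [hwt, min_eq_right hcase]
  · intro c hc hc0
    rw [hset] at hc
    obtain ⟨f, hf, rfl⟩ := hc
    have hf0 : f ≠ 0 := by
      rintro rfl
      exact hc0 (map_zero _)
    exact weight_lower a b m ha hm hq f hf hf0
end

section
/- Let C = C_L(P,G)^⊥ be the dual of an evaluation code, r = c + e a received word with c ∈ C, and let I be the support of the error e. Suppose spaces L(G') and L(G-G') of functions satisfy: (i) every product f·g with f ∈ L(G'), g ∈ L(G-G') lies in L(G); (ii) there exists a nonzero z ∈ L(G') vanishing at all points Pᵢ, i ∈ I; (iii) for each i₀ ∈ I there exists h ∈ L(G-G') with h(P_{i₀}) ≠ 0 and h(Pᵢ) = 0 for i ∈ I, i ≠ i₀. Then any nonzero solution f = Σⱼ aⱼ fⱼ of the syndrome equations Σⱼ [r, fⱼ gᵢ] aⱼ = 0 (for all basis elements gᵢ of L(G-G')) satisfies f(Pᵢ) = 0 for all i ∈ I, i.e., f is an error locator. -/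
/-!
Since `c` is orthogonal to `L(G)` and every product `fⱼ gᵢ` lies in `L(G)`, the syndrome
equations only see the error: `[e, f gᵢ] = 0` for all `i`, hence `[e, f h] = 0` for every
`h ∈ L(G - G')`. Choosing `h` to vanish on the error support except at `i₀`, the pairing
collapses to `e(P_{i₀}) f(P_{i₀}) h(P_{i₀}) = 0`, and the first and last factors are nonzero.
-/

open Finset

section

variable {F ι J K : Type*} [CommSemiring F] [Fintype ι] [Fintype J] [Fintype K]

theorem sum_add_mul_eq_of_sum_mul_eq_zero {c e h : ι → F} (hc : ∑ v, c v * h v = 0) :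
    ∑ v, (c v + e v) * h v = ∑ v, e v * h v := by
  simp only [add_mul, sum_add_distrib, hc, zero_add]

theorem sum_mul_combination_mul_combination (e : ι → F) (a : J → F) (f : J → ι → F)
    (δ : K → F) (g : K → ι → F) :
    ∑ v, e v * (∑ j, a j * f j v) * (∑ i, δ i * g i v) =
      ∑ i, δ i * ∑ j, a j * ∑ v, e v * (f j v * g i v) := by
  simp only [mul_sum, sum_mul]
  rw [sum_comm]
  refine sum_congr rfl fun i _ => ?_
  rw [sum_comm]
  refine sum_congr rfl fun j _ => sum_congr rfl fun v _ => ?_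
  ring

theorem sum_mul_mul_eq_single_of_support {e x y : ι → F} {i₀ : ι}
    (hy : ∀ v, e v ≠ 0 → v ≠ i₀ → y v = 0) :
    ∑ v, e v * x v * y v = e i₀ * x i₀ * y i₀ := by
  refine sum_eq_single i₀ (fun v _ hv => ?_) (fun h => absurd (mem_univ i₀) h)
  by_cases hev : e v = 0
  · simp [hev]
  · rw [hy v hev hv, mul_zero]

end

theorem error_locator_general (F : Type) [Field F]
    (n ℓ k : ℕ) (f : Fin ℓ → (Fin n → F)) (g : Fin k → (Fin n → F))
    (LG : Submodule F (Fin n → F))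
    (hprod : ∀ (j : Fin ℓ) (i : Fin k), (fun v => f j v * g i v) ∈ LG)
    (c e : Fin n → F)
    (hc : ∀ h ∈ LG, ∑ v, c v * h v = 0)
    (hsep : ∀ i₀, e i₀ ≠ 0 → ∃ δ : Fin k → F,
      (∑ i, δ i * g i i₀) ≠ 0 ∧
      ∀ i, e i ≠ 0 → i ≠ i₀ → (∑ i', δ i' * g i' i) = 0)
    (a : Fin ℓ → F)
    (ha : ∀ i : Fin k, ∑ j, a j * (∑ v, (c v + e v) * (f j v * g i v)) = 0) :
    ∀ i, e i ≠ 0 → (∑ j, a j * f j i) = 0 := by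
  intro i₀ he₀
  obtain ⟨δ, hδ₀, hδ⟩ := hsep i₀ he₀
  have herror : ∀ i, ∑ j, a j * ∑ v, e v * (f j v * g i v) = 0 := fun i => by
    simpa only [sum_add_mul_eq_of_sum_mul_eq_zero (hc _ (hprod _ i))] using ha i
  have hpair : ∑ v, e v * (∑ j, a j * f j v) * (∑ i, δ i * g i v) = 0 := by
    simp only [sum_mul_combination_mul_combination, herror, mul_zero, sum_const_zero]
  rw [sum_mul_mul_eq_single_of_support hδ] at hpair
  simpa [he₀, hδ₀] using hpair

/-- Error-locator proposition: under the product, vanishing-function and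
separating-function hypotheses, any nonzero solution `fa = ∑ⱼ aⱼ fⱼ` of the
syndrome equations vanishes at every error position. -/
theorem error_locator (F : Type) [Field F] [Fintype F]
    (n ℓ k : ℕ) (f : Fin ℓ → (Fin n → F)) (g : Fin k → (Fin n → F))
    (LG : Submodule F (Fin n → F))
    (hfli : LinearIndependent F f)
    (hprod : ∀ (j : Fin ℓ) (i : Fin k), (fun v => f j v * g i v) ∈ LG)
    (c e : Fin n → F)
    (hc : ∀ h ∈ LG, ∑ v, c v * h v = 0)
    (hz : ∃ γ : Fin ℓ → F, (fun v => ∑ j, γ j * f j v) ≠ 0 ∧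
      ∀ i, e i ≠ 0 → (∑ j, γ j * f j i) = 0)
    (hsep : ∀ i₀, e i₀ ≠ 0 → ∃ δ : Fin k → F,
      (∑ i, δ i * g i i₀) ≠ 0 ∧
      ∀ i, e i ≠ 0 → i ≠ i₀ → (∑ i', δ i' * g i' i) = 0)
    (a : Fin ℓ → F)
    (ha : ∀ i : Fin k, ∑ j, a j * (∑ v, (c v + e v) * (f j v * g i v)) = 0)
    (hanz : (fun v => ∑ j, a j * f j v) ≠ 0) :
    ∀ i, e i ≠ 0 → (∑ j, a j * f j i) = 0 :=
  error_locator_general F n ℓ k f g LG hprod c e hc hsep a ha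
end

section
/- Under the hypotheses of the error-locator proposition, the linear system Σⱼ aⱼ [r, fⱼ gᵢ] = 0 (for 1 ≤ i ≤ k) has a nontrivial solution (a₁,...,a_ℓ). -/
/-!
Take the coefficients `a = γ` of the nonzero function `z = ∑ⱼ γⱼ fⱼ` that vanishes on the error
positions. By linearity the `i`-th equation reads `[r, z gᵢ] = [c, z gᵢ] + [e, z gᵢ]`. The first
term is `0` because each `fⱼ gᵢ` lies in `L(G)`, which is orthogonal to the codeword `c`; the second
is `0` because every summand `e_v z(P_v) gᵢ(P_v)` has `e_v = 0` or `z(P_v) = 0`.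
The pairing `[x, y] = ∑ᵥ x_v y_v` is `x ⬝ᵥ y`.
-/

open Finset Matrix

section Pairing

variable {R ι κ : Type*} [CommSemiring R] [Fintype ι] [Fintype κ]

theorem sum_mul_dotProduct_mul (r g : ι → R) (a : κ → R) (f : κ → ι → R) :
    ∑ j, a j * (r ⬝ᵥ (f j * g)) = r ⬝ᵥ ((fun v => ∑ j, a j * f j v) * g) := by
  simp only [dotProduct, Pi.mul_apply, mul_sum, sum_mul]
  rw [sum_comm]
  exact sum_congr rfl fun v _ => sum_congr rfl fun j _ => by ring

theorem dotProduct_mul_eq_zero_of_vanishing_on_support {e z : ι → R}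
    (hz : ∀ v, e v ≠ 0 → z v = 0) (g : ι → R) : e ⬝ᵥ (z * g) = 0 := by
  refine sum_eq_zero fun v _ => ?_
  by_cases he : e v = 0
  · simp [he]
  · simp [hz v he]

end Pairing

theorem syndrome_system_nontrivial_solution_general (F : Type) [Field F]
    (n ℓ k : ℕ) (f : Fin ℓ → (Fin n → F)) (g : Fin k → (Fin n → F))
    (LG : Submodule F (Fin n → F))
    (hprod : ∀ (j : Fin ℓ) (i : Fin k), (fun v => f j v * g i v) ∈ LG)
    (c e : Fin n → F)
    (hc : ∀ h ∈ LG, ∑ v, c v * h v = 0)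
    (hz : ∃ γ : Fin ℓ → F, (fun v => ∑ j, γ j * f j v) ≠ 0 ∧
      ∀ i, e i ≠ 0 → (∑ j, γ j * f j i) = 0) :
    ∃ a : Fin ℓ → F, a ≠ 0 ∧
      ∀ i : Fin k, ∑ j, a j * (∑ v, (c v + e v) * (f j v * g i v)) = 0 := by
  obtain ⟨γ, hz_ne, hz_err⟩ := hz
  refine ⟨γ, fun hγ => hz_ne (funext fun v => by simp [hγ]), fun i => ?_⟩
  have hc_zero : c ⬝ᵥ ((fun v => ∑ j, γ j * f j v) * g i) = 0 := by
    rw [← sum_mul_dotProduct_mul]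
    exact sum_eq_zero fun j _ => by rw [show c ⬝ᵥ (f j * g i) = 0 from hc _ (hprod j i), mul_zero]
  change ∑ j, γ j * ((c + e) ⬝ᵥ (f j * g i)) = 0
  rw [sum_mul_dotProduct_mul, add_dotProduct, hc_zero,
    dotProduct_mul_eq_zero_of_vanishing_on_support hz_err, add_zero]

/-- Existence of a nontrivial solution to the syndrome equations: since some
nonzero `z ∈ L(G')` vanishes at all error positions, the linear system
`∑ⱼ aⱼ [r, fⱼ gᵢ] = 0` has a nontrivial solution. -/
theorem syndrome_system_nontrivial_solution (F : Type) [Field F] [Fintype F]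
    (n ℓ k : ℕ) (f : Fin ℓ → (Fin n → F)) (g : Fin k → (Fin n → F))
    (LG : Submodule F (Fin n → F))
    (hfli : LinearIndependent F f)
    (hprod : ∀ (j : Fin ℓ) (i : Fin k), (fun v => f j v * g i v) ∈ LG)
    (c e : Fin n → F)
    (hc : ∀ h ∈ LG, ∑ v, c v * h v = 0)
    (hz : ∃ γ : Fin ℓ → F, (fun v => ∑ j, γ j * f j v) ≠ 0 ∧
      ∀ i, e i ≠ 0 → (∑ j, γ j * f j i) = 0) :
    ∃ a : Fin ℓ → F, a ≠ 0 ∧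
      ∀ i : Fin k, ∑ j, a j * (∑ v, (c v + e v) * (f j v * g i v)) = 0 :=
  syndrome_system_nontrivial_solution_general F n ℓ k f g LG hprod c e hc hz
end
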